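/- arXiv:2304.02471 — 9 statements merged into one kernel-verified Lean document; each statement's English description precedes it below -/
import Mathlib

section
/- For every positive natural number n, the number of regular elements of Z_n equals the sum of Euler's totient function φ(d) over all unitary divisors d of n, i.e., ϱ(n) = Σ_{d ∥ n} φ(d). -/
/-- An element `m` of `ZMod n` is regular if `m^2 * x = m` for some `x`. -/
def IsRegularElem {n : ℕ} (m : ZMod n) : Prop := ∃ x : ZMod n, m ^ 2 * x = m

/-- `ϱ n` is the number of regular elements of `ZMod n`. -/
noncomputable def rho (n : ℕ) : ℕ := Nat.card {m : ZMod n // IsRegularElem m}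

/-- `d` is a unitary divisor of `n`. -/
def UnitaryDivisor (d n : ℕ) : Prop := 0 < d ∧ d ∣ n ∧ Nat.gcd d (n / d) = 1

/-!
`m` is regular modulo `n` iff `n ∣ m (m x - 1)` for some `x`. As `m` and `m x - 1` are coprime,
this splits `n` as `gcd(n, m) · gcd(n, m x - 1)` with coprime factors; conversely, if
`d = gcd(n, m)` is coprime to `n / d`, then `m` is invertible modulo `n / d`. So `m` is regular iff
`gcd(n, m)` is a unitary divisor of `n`, and the residues with `gcd(n, m) = d` number `φ(n / d)`.
Finally `d ↦ n / d` permutes the unitary divisors.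
-/

open Finset
open scoped Nat

theorem isRegularElem_intCast_iff {n : ℕ} (m : ℤ) :
    IsRegularElem (m : ZMod n) ↔ ∃ x : ℤ, (n : ℤ) ∣ m * (m * x - 1) := by
  simp_rw [← ZMod.intCast_zmod_eq_zero_iff_dvd]
  constructor
  · rintro ⟨x, hx⟩
    obtain ⟨x, rfl⟩ := ZMod.intCast_surjective x
    exact ⟨x, by push_cast; linear_combination hx⟩
  · rintro ⟨x, hx⟩
    push_cast at hx
    exact ⟨x, by linear_combination hx⟩

theorem exists_dvd_mul_mul_sub_one_iff_coprime {n m : ℕ} (hn : 0 < n) :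
    (∃ x : ℤ, (n : ℤ) ∣ m * (m * x - 1)) ↔ (n.gcd m).Coprime (n / n.gcd m) := by
  constructor
  · rintro ⟨x, hx⟩
    set b := (m * x - 1).natAbs
    have hmb : m.Coprime b :=
      Int.isCoprime_iff_gcd_eq_one.mp (⟨x, -1, by ring⟩ : IsCoprime (m : ℤ) (m * x - 1))
    have hnb : n ∣ m * b := by simpa [b, Int.natAbs_mul] using Int.natCast_dvd.mp hx
    have hsplit : n = n.gcd m * n.gcd b := by rw [← hmb.gcd_mul, Nat.gcd_eq_left hnb]
    rw [Nat.div_eq_of_eq_mul_right (Nat.gcd_pos_of_pos_left m hn) hsplit]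
    exact (hmb.coprime_dvd_left (Nat.gcd_dvd_right n m)).coprime_dvd_right (Nat.gcd_dvd_right n b)
  · intro hcop
    set g := n.gcd m
    have hg : 0 < g := Nat.gcd_pos_of_pos_left m hn
    have hm : m = g * (m / g) := (Nat.mul_div_cancel' (Nat.gcd_dvd_right n m)).symm
    have hn' : n = g * (n / g) := (Nat.mul_div_cancel' (Nat.gcd_dvd_left n m)).symm
    have hmn : m.Coprime (n / g) := by
      rw [hm]; exact hcop.mul_left (Nat.coprime_div_gcd_div_gcd hg).symm
    obtain ⟨u, v, huv⟩ := Nat.isCoprime_iff_coprime.mpr hmn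
    refine ⟨u, -v * (m / g : ℕ), ?_⟩
    rw [hn']; nth_rw 1 [hm]; simp only [Nat.cast_mul]
    linear_combination (g : ℤ) * (m / g : ℕ) * huv

theorem isRegularElem_natCast_iff {n : ℕ} (hn : 0 < n) (m : ℕ) :
    IsRegularElem (m : ZMod n) ↔ UnitaryDivisor (n.gcd m) n := by
  rw [← Int.cast_natCast, isRegularElem_intCast_iff, exists_dvd_mul_mul_sub_one_iff_coprime hn]
  exact ⟨fun h => ⟨Nat.gcd_pos_of_pos_left m hn, Nat.gcd_dvd_left n m, h⟩, fun h => h.2.2⟩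

theorem UnitaryDivisor.div {d n : ℕ} (hn : 0 < n) (h : UnitaryDivisor d n) :
    UnitaryDivisor (n / d) n := by
  obtain ⟨hd, hdn, hcop⟩ := h
  refine ⟨Nat.div_pos (Nat.le_of_dvd hn hdn) hd, Nat.div_dvd_of_dvd hdn, ?_⟩
  rw [Nat.div_div_self hdn hn.ne', Nat.gcd_comm, hcop]

theorem ZMod.natCard_subtype_eq_card_filter_range {n : ℕ} [NeZero n] (P : ZMod n → Prop)
    [DecidablePred P] : Nat.card {m : ZMod n // P m} = #((range n).filter fun k : ℕ => P k) := by
  rw [Nat.card_eq_fintype_card, Fintype.card_subtype]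
  refine card_nbij' ZMod.val (fun k => (k : ZMod n)) ?_ ?_ ?_ ?_
  · intro m hm
    simpa [ZMod.val_lt] using hm
  · intro k hk
    simpa using (mem_filter.mp hk).2
  · intro m _
    exact ZMod.natCast_zmod_val m
  · intro k hk
    exact ZMod.val_natCast_of_lt (mem_range.mp (mem_filter.mp hk).1)

theorem Nat.card_filter_range_gcd_eq_sum_totient (n : ℕ) (P : ℕ → Prop) [DecidablePred P] :
    #{k ∈ range n | P (n.gcd k)} = ∑ d ∈ n.divisors with P d, φ (n / d) := by
  have hmaps : Set.MapsTo n.gcd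
      ↑({k ∈ range n | P (n.gcd k)} : Finset ℕ) ↑({d ∈ n.divisors | P d} : Finset ℕ) := by
    intro k hk
    simp only [coe_filter, mem_range, Set.mem_ofPred_eq, Nat.mem_divisors] at hk ⊢
    exact ⟨⟨Nat.gcd_dvd_left n k, by omega⟩, hk.2⟩
  rw [card_eq_sum_card_fiberwise hmaps]
  refine sum_congr rfl fun d hd => ?_
  rw [Nat.totient_div_of_dvd (Nat.dvd_of_mem_divisors (mem_filter.mp hd).1), filter_filter]
  congr 1
  exact filter_congr fun k _ => ⟨And.right, fun h => ⟨h ▸ (mem_filter.mp hd).2, h⟩⟩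

theorem sum_unitaryDivisors_totient_div {n : ℕ} (hn : 0 < n) [DecidablePred (UnitaryDivisor · n)] :
    ∑ d ∈ n.divisors with UnitaryDivisor d n, φ (n / d)
      = ∑ d ∈ n.divisors with UnitaryDivisor d n, φ d := by
  set s : Finset ℕ := {d ∈ n.divisors | UnitaryDivisor d n}
  have hmaps : Set.MapsTo (n / ·) s s := by
    intro d hd
    simp only [s, coe_filter, Nat.mem_divisors, Set.mem_ofPred_eq] at hd ⊢
    exact ⟨⟨Nat.div_dvd_of_dvd hd.1.1, hn.ne'⟩, hd.2.div hn⟩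
  have hinv : Set.LeftInvOn (n / ·) (n / ·) s :=
    fun d hd => Nat.div_div_self (Nat.dvd_of_mem_divisors (mem_filter.mp hd).1) hn.ne'
  exact sum_nbij' (n / ·) (n / ·) hmaps hmaps hinv hinv fun _ _ => rfl

open Classical in
theorem rho_eq_sum_totient_unitaryDivisors (n : ℕ) (hn : 0 < n) :
    rho n = ∑ d ∈ n.divisors.filter (fun d => UnitaryDivisor d n), Nat.totient d := by
  have : NeZero n := ⟨hn.ne'⟩
  rw [rho, ZMod.natCard_subtype_eq_card_filter_range,
    filter_congr fun m _ => isRegularElem_natCast_iff hn m,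
    Nat.card_filter_range_gcd_eq_sum_totient n (UnitaryDivisor · n),
    sum_unitaryDivisors_totient_div hn]
end

section
/- For every positive natural number n and every m with 0 ≤ m < n, m is regular modulo n if and only if gcd(m, n) is a unitary divisor of n. -/
/-!
With `d = gcd m n`, the congruence `m * (m * x) ≡ m * 1 [ZMOD n]` cancels to
`m * x ≡ 1 [ZMOD n / d]`, so `m` is regular modulo `n` exactly when `m` is invertible modulo
`n / d`. As every common divisor of `m` and `n / d` divides `d`, `m` is coprime to `n / d`
exactly when `d` is.
-/

/-- An integer `m` is regular modulo `n` if `m^2 * x ≡ m (mod n)` for some integer `x`. -/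
def IsRegularMod (n : ℕ) (m : ℤ) : Prop := ∃ x : ℤ, m ^ 2 * x ≡ m [ZMOD (n : ℤ)]

theorem Int.isCoprime_of_mul_modEq_one {a x n : ℤ} (h : a * x ≡ 1 [ZMOD n]) :
    IsCoprime a n := by
  obtain ⟨k, hk⟩ := Int.modEq_iff_dvd.mp h
  exact ⟨x, k, by linear_combination -hk⟩

theorem Nat.coprime_div_gcd_iff (m n : ℕ) :
    Coprime m (n / gcd m n) ↔ Coprime (gcd m n) (n / gcd m n) := by
  refine ⟨fun h => h.coprime_dvd_left (gcd_dvd_left m n), fun h => ?_⟩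
  have hdvd_gcd : gcd m (n / gcd m n) ∣ gcd m n :=
    gcd_dvd_gcd_of_dvd_right m (div_dvd_of_dvd (gcd_dvd_right m n))
  exact eq_one_of_dvd_one (h ▸ dvd_gcd hdvd_gcd (gcd_dvd_right _ _))

theorem isRegularMod_iff_coprime_div_gcd {n : ℕ} (hn : 0 < n) (m : ℕ) :
    IsRegularMod n m ↔ Nat.Coprime m (n / Nat.gcd m n) := by
  constructor
  · rintro ⟨x, hx⟩
    have hcancel := Int.ModEq.cancel_left_div_gcd (c := (m : ℤ)) (a := m * x) (b := 1)
      (Int.natCast_pos.mpr hn) (by rwa [← mul_assoc, ← sq, mul_one])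
    rw [Int.gcd_natCast_natCast, ← Int.natCast_div, Nat.gcd_comm] at hcancel
    exact Nat.isCoprime_iff_coprime.mp (Int.isCoprime_of_mul_modEq_one hcancel)
  · intro h
    obtain ⟨x, hx⟩ := Int.mod_coprime h
    have hdvd : n ∣ m * (n / Nat.gcd m n) :=
      calc n = Nat.gcd m n * (n / Nat.gcd m n) := (Nat.mul_div_cancel' (Nat.gcd_dvd_right m n)).symm
        _ ∣ m * (n / Nat.gcd m n) := mul_dvd_mul_right (Nat.gcd_dvd_left m n) _
    have hmul := (hx.mul_left' (c := (m : ℤ))).of_dvd (Int.natCast_dvd_natCast.mpr hdvd)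
    exact ⟨x, by simpa only [sq, mul_assoc, mul_one] using hmul⟩

theorem isRegularMod_iff_gcd_unitaryDivisor_general (n : ℕ) (hn : 0 < n) (m : ℕ) :
    IsRegularMod n (m : ℤ) ↔ UnitaryDivisor (Nat.gcd m n) n := by
  rw [isRegularMod_iff_coprime_div_gcd hn, Nat.coprime_div_gcd_iff]
  exact ⟨fun h => ⟨Nat.gcd_pos_of_pos_right m hn, Nat.gcd_dvd_right m n, h⟩, fun h => h.2.2⟩

theorem isRegularMod_iff_gcd_unitaryDivisor (n : ℕ) (hn : 0 < n) (m : ℕ) (hm : m < n) :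
    IsRegularMod n (m : ℤ) ↔ UnitaryDivisor (Nat.gcd m n) n :=
  isRegularMod_iff_gcd_unitaryDivisor_general n hn m
end

section
/- For every positive natural number n and every integer m, m is regular modulo n if and only if gcd(m^2, n) divides m. -/
theorem Int.exists_mul_modEq_iff_gcd_dvd (a b n : ℤ) :
    (∃ x, a * x ≡ b [ZMOD n]) ↔ (Int.gcd a n : ℤ) ∣ b := by
  rw [Int.coe_gcd, gcd_dvd_iff_exists]
  constructor
  · rintro ⟨x, hx⟩
    obtain ⟨y, hy⟩ := hx.dvd
    exact ⟨x, y, by rw [← hy]; ring⟩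
  · rintro ⟨x, y, rfl⟩
    exact ⟨x, Int.modEq_iff_dvd.mpr ⟨y, by ring⟩⟩

theorem isRegularMod_iff_gcd_sq_dvd_general (n : ℕ) (m : ℤ) :
    IsRegularMod n m ↔ (Int.gcd (m ^ 2) (n : ℤ) : ℤ) ∣ m :=
  Int.exists_mul_modEq_iff_gcd_dvd (m ^ 2) m n

theorem isRegularMod_iff_gcd_sq_dvd (n : ℕ) (hn : 0 < n) (m : ℤ) :
    IsRegularMod n m ↔ (Int.gcd (m ^ 2) (n : ℤ) : ℤ) ∣ m :=
  isRegularMod_iff_gcd_sq_dvd_general n m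
end

section
/- The function n ↦ ϱ(n) counting the regular elements of Z_n is multiplicative: if m and n are coprime positive natural numbers, then ϱ(m * n) = ϱ(m) * ϱ(n). -/
theorem rho_multiplicative (m n : ℕ) (hm : 0 < m) (hn : 0 < n) (h : Nat.Coprime m n) :
    rho (m * n) = rho m * rho n := by
  let e := ZMod.chineseRemainder h
  have key : {c : ZMod (m * n) // IsRegularElem c} ≃
      {a : ZMod m // IsRegularElem a} × {b : ZMod n // IsRegularElem b} := by
    refine (e.toEquiv.subtypeEquiv
      (q := fun p => IsRegularElem p.1 ∧ IsRegularElem p.2) ?_).trans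
      Equiv.subtypeProdEquivProd
    intro c
    have h1 : IsRegularElem c ↔ ∃ x, (e c) ^ 2 * x = e c := by
      constructor
      · rintro ⟨x, hx⟩
        exact ⟨e x, by rw [← map_pow, ← map_mul, hx]⟩
      · rintro ⟨x, hx⟩
        refine ⟨e.symm x, e.injective ?_⟩
        rw [map_mul, map_pow, RingEquiv.apply_symm_apply, hx]
    rw [h1]
    constructor
    · rintro ⟨x, hx⟩
      exact ⟨⟨x.1, congrArg Prod.fst hx⟩, ⟨x.2, congrArg Prod.snd hx⟩⟩
    · rintro ⟨⟨x1, hx1⟩, ⟨x2, hx2⟩⟩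
      exact ⟨(x1, x2), Prod.ext hx1 hx2⟩
  rw [rho, rho, rho, Nat.card_congr key, Nat.card_prod]
end

section
/- For every positive natural number n and every m with 0 ≤ m < n, m is regular modulo n if and only if for every prime p dividing n, the p-adic valuation of m is either 0 or at least the p-adic valuation of n (where for m = 0 the condition is vacuously satisfied since 0 is regular). -/
theorem isRegularMod_iff_factorization (n : ℕ) (hn : 0 < n) (m : ℕ) (hm : m < n) :
    IsRegularMod n (m : ℤ) ↔
      ∀ p : ℕ, p.Prime → p ∣ n →
        m.factorization p = 0 ∨ n.factorization p ≤ m.factorization p := by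
  constructor
  · rintro ⟨x, hx⟩ p hp hpn
    by_cases h0 : m.factorization p = 0
    · exact Or.inl h0
    right
    have hm0 : m ≠ 0 := by rintro rfl; simp at h0
    have hpm : p ∣ m := by
      by_contra hnd
      exact h0 (Nat.factorization_eq_zero_of_not_dvd hnd)
    -- n ∣ m - m^2 x = m * (1 - m x)
    have hdvd : (n : ℤ) ∣ (m : ℤ) * (1 - (m : ℤ) * x) := by
      have := (Int.ModEq.dvd hx)
      have e : (m : ℤ) - (m : ℤ) ^ 2 * x = (m : ℤ) * (1 - (m : ℤ) * x) := by ring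
      rwa [e] at this
    set k := n.factorization p with hk
    have hpk : (p : ℕ) ^ k ∣ n := Nat.ordProj_dvd n p
    have hpkZ : ((p ^ k : ℕ) : ℤ) ∣ (m : ℤ) * (1 - (m : ℤ) * x) :=
      dvd_trans (Int.natCast_dvd_natCast.mpr hpk) hdvd
    push_cast at hpkZ
    obtain ⟨c, hc⟩ := hpm
    have hcop : IsCoprime ((p : ℤ)) (1 - (m : ℤ) * x) := by
      refine ⟨(c : ℤ) * x, 1, ?_⟩
      have : (m : ℤ) = (p : ℤ) * (c : ℤ) := by exact_mod_cast hc
      rw [this]; ring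
    have hcopk : IsCoprime ((p : ℤ) ^ k) (1 - (m : ℤ) * x) := hcop.pow_left
    have hdm : ((p : ℤ)) ^ k ∣ (m : ℤ) := hcopk.dvd_of_dvd_mul_right hpkZ
    have hdmn : p ^ k ∣ m := by exact_mod_cast hdm
    exact (Nat.Prime.pow_dvd_iff_le_factorization hp hm0).mp hdmn
  · intro h
    by_cases hm0 : m = 0
    · exact ⟨0, by simp [hm0, Int.ModEq.refl]⟩
    set F := n.primeFactors.filter (· ∣ m) with hF
    set n1 := ∏ p ∈ F, p ^ n.factorization p with hn1
    set n2 := ∏ p ∈ n.primeFactors.filter (fun p => ¬ p ∣ m), p ^ n.factorization p with hn2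
    have hn12 : n1 * n2 = n := by
      rw [hn1, hn2, Finset.prod_filter_mul_prod_filter_not, ← Nat.support_factorization]
      exact Nat.factorization_prod_pow_eq_self hn.ne'
    have h1 : n1 ∣ m := by
      have hsub : F ⊆ m.primeFactors := by
        intro p hp
        simp only [hF, Finset.mem_filter, Nat.mem_primeFactors] at hp ⊢
        exact ⟨hp.1.1, hp.2, hm0⟩
      calc n1 ∣ ∏ p ∈ F, p ^ m.factorization p := by
            apply Finset.prod_dvd_prod_of_dvd
            intro p hp
            simp only [hF, Finset.mem_filter, Nat.mem_primeFactors] at hp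
            refine pow_dvd_pow p ?_
            rcases h p hp.1.1 hp.1.2.1 with h' | h'
            · have : p ∣ m := hp.2
              exact absurd (Nat.factorization_eq_zero_iff m p |>.mp h')
                (by push_neg; exact ⟨hp.1.1, this, hm0⟩)
            · exact h'
        _ ∣ ∏ p ∈ m.primeFactors, p ^ m.factorization p := by
            apply Finset.prod_dvd_prod_of_subset _ _ _ hsub
        _ = m := Nat.factorization_prod_pow_eq_self hm0
    have h2 : Nat.Coprime n2 m := by
      apply Nat.Coprime.prod_left
      intro p hp
      simp only [Finset.mem_filter, Nat.mem_primeFactors] at hp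
      exact Nat.Coprime.pow_left _ ((Nat.Prime.coprime_iff_not_dvd hp.1.1).mpr hp.2)
    have hcop : IsCoprime ((m : ℤ)) ((n2 : ℤ)) :=
      Nat.isCoprime_iff_coprime.mpr h2.symm
    obtain ⟨u, v, huv⟩ := hcop
    refine ⟨u, ?_⟩
    rw [Int.modEq_iff_dvd]
    have e : (m : ℤ) - (m : ℤ) ^ 2 * u = (m : ℤ) * (1 - u * m) := by ring
    rw [e]
    have h1Z : ((n1 : ℤ)) ∣ (m : ℤ) := Int.natCast_dvd_natCast.mpr h1
    have h2Z : ((n2 : ℤ)) ∣ (1 - u * (m : ℤ)) := by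
      have h' : 1 - u * (m : ℤ) = v * n2 := by linarith [huv]
      rw [h']
      exact dvd_mul_left _ _
    have hd := mul_dvd_mul h1Z h2Z
    rw [← hn12]
    push_cast
    exact hd
end

section
/- For every positive natural number n, the map m ↦ (m / gcd(m, n), n / gcd(m, n)) is a bijection from the set of regular elements m of Z_n (represented as natural numbers with 0 ≤ m < n) onto the set of pairs (k, d) where d is a unitary divisor of n, 0 ≤ k < d, and gcd(k, d) = 1. -/
lemma regular_iff (n : ℕ) (hn : 0 < n) (m : ℕ) :
    IsRegularMod n (m : ℤ) ↔ Nat.gcd (Nat.gcd m n) (n / Nat.gcd m n) = 1 := by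
  set g := Nat.gcd m n with hg
  have hgpos : 0 < g := Nat.gcd_pos_of_pos_right m hn
  have hgm : g ∣ m := Nat.gcd_dvd_left m n
  have hgn : g ∣ n := Nat.gcd_dvd_right m n
  set n' := n / g with hn'
  set m' := m / g with hm'
  have hmn : n = g * n' := (Nat.mul_div_cancel' hgn).symm
  have hmm : m = g * m' := (Nat.mul_div_cancel' hgm).symm
  have hco : Nat.Coprime m' n' := Nat.coprime_div_gcd_div_gcd hgpos
  constructor
  · rintro ⟨x, hx⟩
    have hdvd : (n : ℤ) ∣ (m : ℤ) ^ 2 * x - m := (Int.ModEq.dvd hx.symm)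
    have h2 : (n' : ℤ) ∣ (m' : ℤ) * ((m : ℤ) * x - 1) := by
      have : ((g : ℤ) * n') ∣ (g : ℤ) * ((m' : ℤ) * ((m : ℤ) * x - 1)) := by
        rw [← Nat.cast_mul, ← hmn]
        convert hdvd using 1
        push_cast [hmm]
        ring
      exact (mul_dvd_mul_iff_left (by exact_mod_cast hgpos.ne' : (g:ℤ) ≠ 0)).mp this
    have h3 : (n' : ℤ) ∣ (m : ℤ) * x - 1 := by
      have hc : IsCoprime (m' : ℤ) (n' : ℤ) := Int.isCoprime_iff_gcd_eq_one.mpr hco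
      exact (hc.symm).dvd_of_dvd_mul_left h2
    -- gcd g n' divides 1
    have h4 : (Nat.gcd g n' : ℤ) ∣ 1 := by
      have d1 : (Nat.gcd g n' : ℤ) ∣ (m : ℤ) * x := by
        exact Dvd.dvd.mul_right (Int.natCast_dvd_natCast.mpr ((Nat.gcd_dvd_left g n').trans hgm)) x
      have d2 : (Nat.gcd g n' : ℤ) ∣ (m : ℤ) * x - 1 :=
        (Int.natCast_dvd_natCast.mpr (Nat.gcd_dvd_right g n')).trans h3
      have := dvd_sub d1 d2
      simpa using this
    exact Nat.dvd_one.mp (by exact_mod_cast h4)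
  · intro h
    have hmn' : Nat.Coprime m n' := by
      rw [hmm]
      exact Nat.Coprime.mul (Nat.Coprime.symm (Nat.Coprime.symm h)) hco
    have hc : IsCoprime (m : ℤ) (n' : ℤ) := Int.isCoprime_iff_gcd_eq_one.mpr hmn'
    obtain ⟨a, b, hab⟩ := hc
    refine ⟨a, ?_⟩
    have hdvd : (n' : ℤ) ∣ (m : ℤ) * a - 1 := ⟨-b, by linarith [hab]⟩
    have : (n : ℤ) ∣ (m : ℤ) ^ 2 * a - m := by
      obtain ⟨c, hcn⟩ := hdvd
      refine ⟨(m' : ℤ) * c, ?_⟩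
      have h5 : ((g:ℤ) * m' * a - 1) = n' * c := by
        rw [hmm] at hcn; push_cast at hcn; linarith
      push_cast [hmn, hmm]
      linear_combination ((g:ℤ) * m') * h5
    exact (Int.modEq_iff_dvd.mpr (by simpa using this)).symm

theorem bijOn_regular_to_reduced_fractions (n : ℕ) (hn : 0 < n) :
    Set.BijOn (fun m : ℕ => (m / Nat.gcd m n, n / Nat.gcd m n))
      {m : ℕ | m < n ∧ IsRegularMod n (m : ℤ)}
      {p : ℕ × ℕ | UnitaryDivisor p.2 n ∧ p.1 < p.2 ∧ Nat.gcd p.1 p.2 = 1} := by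
  refine ⟨?_, ?_, ?_⟩
  · rintro m ⟨hm, hreg⟩
    have hg := (regular_iff n hn m).mp hreg
    set g := Nat.gcd m n with hgdef
    have hgpos : 0 < g := Nat.gcd_pos_of_pos_right m hn
    have hgm : g ∣ m := Nat.gcd_dvd_left m n
    have hgn : g ∣ n := Nat.gcd_dvd_right m n
    have hdpos : 0 < n / g := Nat.div_pos (Nat.le_of_dvd hn hgn) hgpos
    have hndg : n / (n / g) = g := Nat.div_div_self hgn hn.ne'
    refine ⟨⟨hdpos, Nat.div_dvd_of_dvd hgn, ?_⟩, ?_, ?_⟩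
    · rw [hndg]; exact (Nat.gcd_comm _ _).trans hg
    · exact Nat.div_lt_div_of_lt_of_dvd hgn hm
    · exact Nat.coprime_div_gcd_div_gcd hgpos
  · rintro m₁ ⟨hm₁, _⟩ m₂ ⟨hm₂, _⟩ heq
    simp only [Prod.mk.injEq] at heq
    obtain ⟨h1, h2⟩ := heq
    have hg₁ : Nat.gcd m₁ n ∣ n := Nat.gcd_dvd_right _ _
    have hg₂ : Nat.gcd m₂ n ∣ n := Nat.gcd_dvd_right _ _
    have hgeq : Nat.gcd m₁ n = Nat.gcd m₂ n := by
      have := congrArg (n / ·) h2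
      simpa [Nat.div_div_self hg₁ hn.ne', Nat.div_div_self hg₂ hn.ne'] using this
    calc m₁ = m₁ / Nat.gcd m₁ n * Nat.gcd m₁ n := (Nat.div_mul_cancel (Nat.gcd_dvd_left _ _)).symm
      _ = m₂ / Nat.gcd m₂ n * Nat.gcd m₂ n := by rw [h1, hgeq]
      _ = m₂ := Nat.div_mul_cancel (Nat.gcd_dvd_left _ _)
  · rintro ⟨k, d⟩ ⟨⟨hdpos, hdn, hud⟩, hkd, hkdco⟩
    set g := n / d with hgdef
    have hgpos : 0 < g := Nat.div_pos (Nat.le_of_dvd hn hdn) hdpos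
    have hgd : g * d = n := Nat.div_mul_cancel hdn
    refine ⟨k * g, ⟨?_, ?_⟩, ?_⟩
    · calc k * g < d * g := (Nat.mul_lt_mul_right hgpos).mpr hkd
        _ = n := by rw [Nat.mul_comm]; exact hgd
    · rw [regular_iff n hn]
      have hgcd : Nat.gcd (k * g) n = g := by
        rw [← hgd, Nat.mul_comm g d, Nat.gcd_mul_right, hkdco, one_mul]
      rw [hgcd]
      have : n / g = d := by rw [← hgd, Nat.mul_div_cancel_left d hgpos]  -- careful
      rw [this]
      exact (Nat.gcd_comm g d).trans hud
    · have hgcd : Nat.gcd (k * g) n = g := by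
        rw [← hgd, Nat.mul_comm g d, Nat.gcd_mul_right, hkdco, one_mul]
      have hnd : n / g = d := by rw [← hgd, Nat.mul_div_cancel_left d hgpos]
      simp only [hgcd, Nat.mul_div_cancel _ hgpos, hnd]
end

section
/- For every positive natural number n, ϱ(n) = Σ_{J ⊆ P(n)} φ(Π_{p ∈ J} p^(n_p)), where P(n) is the set of prime divisors of n and n_p is the p-adic valuation of n. -/
/-!
By the Chinese remainder theorem `ZMod n` is the product of the rings `ZMod (p ^ k)` over the
prime powers exactly dividing `n`, and an element of a product is regular iff each component is,
so `ϱ` is multiplicative. Each `ZMod (p ^ k)` is a local ring, where `a ^ 2 * x = a` forces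
`a * (1 - a * x) = 0` with `1 - a * x` a unit unless `a` is, so the regular elements are `0` and
the units and `ϱ (p ^ k) = φ (p ^ k) + 1`. Expanding `∏ (φ (p ^ k) + 1)` over subsets of the
primes and using multiplicativity of `φ` gives the sum.
-/

/-- `IsRegularElem` on `ZMod n`, in any monoid; in a commutative one this is `a * x * a = a`. -/
def IsVonNeumannRegular {M : Type*} [Monoid M] (a : M) : Prop := ∃ x, a ^ 2 * x = a

section Monoid

variable {M N : Type*} [Monoid M] [Monoid N]

theorem IsUnit.isVonNeumannRegular {a : M} (h : IsUnit a) : IsVonNeumannRegular a :=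
  ⟨↑h.unit⁻¹, by rw [sq, mul_assoc, h.mul_val_inv, mul_one]⟩

theorem MulEquiv.isVonNeumannRegular_apply_iff (e : M ≃* N) {a : M} :
    IsVonNeumannRegular (e a) ↔ IsVonNeumannRegular a := by
  constructor
  · rintro ⟨x, hx⟩
    exact ⟨e.symm x, e.injective (by simpa using hx)⟩
  · rintro ⟨x, hx⟩
    exact ⟨e x, by rw [← map_pow, ← map_mul, hx]⟩

theorem Prod.isVonNeumannRegular_iff {a : M × N} :
    IsVonNeumannRegular a ↔ IsVonNeumannRegular a.1 ∧ IsVonNeumannRegular a.2 := by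
  constructor
  · rintro ⟨x, hx⟩
    exact ⟨⟨x.1, congrArg Prod.fst hx⟩, ⟨x.2, congrArg Prod.snd hx⟩⟩
  · rintro ⟨⟨x, hx⟩, ⟨y, hy⟩⟩
    exact ⟨(x, y), Prod.ext hx hy⟩

theorem MulEquiv.card_isVonNeumannRegular_eq (e : M ≃* N) :
    Nat.card {a : M // IsVonNeumannRegular a} = Nat.card {b : N // IsVonNeumannRegular b} :=
  Nat.card_congr (e.toEquiv.subtypeEquiv fun _ => e.isVonNeumannRegular_apply_iff.symm)

theorem Prod.card_isVonNeumannRegular :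
    Nat.card {a : M × N // IsVonNeumannRegular a} =
      Nat.card {a : M // IsVonNeumannRegular a} * Nat.card {b : N // IsVonNeumannRegular b} := by
  rw [← Nat.card_prod]
  exact Nat.card_congr
    ((Equiv.subtypeEquivRight fun _ => Prod.isVonNeumannRegular_iff).trans
      Equiv.subtypeProdEquivProd)

end Monoid

namespace IsLocalRing

variable {R : Type*} [CommRing R] [IsLocalRing R]

theorem isVonNeumannRegular_iff {a : R} : IsVonNeumannRegular a ↔ a = 0 ∨ IsUnit a := by
  refine ⟨fun ⟨x, hx⟩ => or_iff_not_imp_right.mpr fun ha => ?_, ?_⟩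
  · have hax : IsUnit (1 - a * x) :=
      (isUnit_or_isUnit_one_sub_self (a * x)).resolve_left fun h => ha (isUnit_of_mul_isUnit_left h)
    have hzero : a * (1 - a * x) = 0 := by
      rw [mul_sub, mul_one, ← mul_assoc, ← sq, hx, sub_self]
    exact hax.mul_left_eq_zero.mp hzero
  · rintro (rfl | ha)
    · exact ⟨0, by simp⟩
    · exact ha.isVonNeumannRegular

theorem card_isVonNeumannRegular [Finite R] :
    Nat.card {a : R // IsVonNeumannRegular a} = Nat.card Rˣ + 1 := by
  classical
  have : Fintype R := Fintype.ofFinite R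
  rw [Nat.card_congr (Equiv.subtypeEquivRight fun _ => isVonNeumannRegular_iff),
    Nat.card_eq_fintype_card, Fintype.card_subtype_or_disjoint, Fintype.card_subtype_eq, add_comm,
    ← Nat.card_eq_fintype_card,
    Nat.card_congr (Submonoid.unitsTypeEquivIsUnitSubmonoid (M := R)).toEquiv]
  · rfl
  · exact disjoint_iff_inf_le.mpr fun a ⟨h0, hu⟩ => by simp_all

end IsLocalRing

theorem rho_eq_card_isVonNeumannRegular (n : ℕ) :
    rho n = Nat.card {a : ZMod n // IsVonNeumannRegular a} := rfl

theorem rho_one : rho 1 = 1 :=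
  Nat.card_eq_one_iff_unique.mpr ⟨inferInstance, ⟨⟨0, 0, by simp⟩⟩⟩

theorem rho_mul {m n : ℕ} (h : m.Coprime n) : rho (m * n) = rho m * rho n :=
  (ZMod.chineseRemainder h).toMulEquiv.card_isVonNeumannRegular_eq.trans
    Prod.card_isVonNeumannRegular

theorem rho_prime_pow {p k : ℕ} (hp : p.Prime) (hk : k ≠ 0) :
    rho (p ^ k) = Nat.totient (p ^ k) + 1 := by
  have : Fact p.Prime := ⟨hp⟩
  have : Fact (1 < p ^ k) := ⟨Nat.one_lt_pow hk hp.one_lt⟩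
  have : IsLocalRing (ZMod (p ^ k)) :=
    .of_surjective' (PadicInt.toZModPow k) (ZMod.ringHom_surjective _)
  rw [rho_eq_card_isVonNeumannRegular, IsLocalRing.card_isVonNeumannRegular,
    Nat.card_eq_fintype_card, ZMod.card_units_eq_totient]

namespace Nat

open Function

theorem totient_prod_of_pairwise_coprime {ι : Type*} {s : Finset ι} {f : ι → ℕ}
    (hs : (s : Set ι).Pairwise (Coprime on f)) :
    totient (∏ i ∈ s, f i) = ∏ i ∈ s, totient (f i) := by
  classical
  induction s using Finset.induction_on with
  | empty => simp
  | insert a s ha ih =>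
    rw [Finset.coe_insert, Set.pairwise_insert_of_symm] at hs
    rw [Finset.prod_insert ha, Finset.prod_insert ha, totient_mul, ih hs.1]
    exact Coprime.prod_right fun i hi => hs.2 i hi (ne_of_mem_of_not_mem hi ha).symm

theorem sum_powerset_totient_prod_eq_prod_add_one {ι : Type*} {s : Finset ι} {f : ι → ℕ}
    (hs : (s : Set ι).Pairwise (Coprime on f)) :
    ∑ J ∈ s.powerset, totient (∏ i ∈ J, f i) = ∏ i ∈ s, (totient (f i) + 1) := by
  classical
  rw [Finset.prod_add]
  refine Finset.sum_congr rfl fun J hJ => ?_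
  rw [Finset.prod_const_one, mul_one,
    totient_prod_of_pairwise_coprime (hs.mono (Finset.mem_powerset.mp hJ))]

end Nat

theorem rho_eq_sum_powerset_totient (n : ℕ) (hn : 0 < n) :
    rho n = ∑ J ∈ n.primeFactors.powerset, Nat.totient (∏ p ∈ J, p ^ n.factorization p) := by
  have hcop : (n.primeFactors : Set ℕ).Pairwise
      (Function.onFun Nat.Coprime fun p => p ^ n.factorization p) :=
    fun p hp q hq hpq => Nat.coprime_pow_primes _ _ (Nat.prime_of_mem_primeFactors hp)
      (Nat.prime_of_mem_primeFactors hq) hpq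
  rw [Nat.sum_powerset_totient_prod_eq_prod_add_one hcop,
    Nat.multiplicative_factorization rho (fun _ _ => rho_mul) rho_one hn.ne',
    Nat.prod_factorization_eq_prod_primeFactors]
  refine Finset.prod_congr rfl fun p hp => rho_prime_pow (Nat.prime_of_mem_primeFactors hp) ?_
  rwa [← Finsupp.mem_support_iff, Nat.support_factorization]
end

section
/- Let n be a positive natural number, let P(n) be its set of prime divisors, and for each prime p ∈ P(n) let A_p = { m : 0 ≤ m < n and 0 < m_p < n_p }, where m_p denotes the p-adic valuation (with the convention that the condition fails for m = 0). Then ϱ(n) = Σ_{I ⊆ P(n)} (-1)^{|I|} |∩_{i ∈ I} A_i|, where for I = ∅ the intersection is taken to be {0, 1, ..., n-1}. -/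
lemma key (n : ℕ) (hn : 0 < n) (m : ℕ) :
    IsRegularElem (m : ZMod n) ↔
      ∀ p ∈ n.primeFactors, ¬(0 < m.factorization p ∧ m.factorization p < n.factorization p) := by
  haveI : NeZero n := ⟨hn.ne'⟩
  constructor
  · rintro ⟨x, hx⟩ p hp ⟨hk0, hka⟩
    have hpp : p.Prime := Nat.prime_of_mem_primeFactors hp
    have hm0 : m ≠ 0 := by
      intro h; subst h; simp at hk0
    set k := m.factorization p with hk
    set y := x.val with hy
    have hxy : x = (y : ZMod n) := (ZMod.natCast_rightInverse x).symm
    have hmod : (m ^ 2 * y : ℕ) ≡ m [MOD n] := by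
      rw [← ZMod.natCast_eq_natCast_iff]
      push_cast
      rw [← hxy, hx]
    have h1 : p ^ (k + 1) ∣ n := by
      rw [hpp.pow_dvd_iff_le_factorization hn.ne']
      omega
    have h2 : p ^ (k + 1) ∣ m ^ 2 * y := by
      have hpk : p ^ k ∣ m := by
        rw [hpp.pow_dvd_iff_le_factorization hm0]
      have h2' : p ^ (k * 2) ∣ m ^ 2 := by
        simpa [← pow_mul] using pow_dvd_pow_of_dvd hpk 2
      exact dvd_mul_of_dvd_left (dvd_trans (pow_dvd_pow p (by omega)) h2') y
    have h3 : (p : ℤ) ^ (k + 1) ∣ (m : ℤ) := by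
      have hd := hmod.dvd
      have : ((p : ℤ)) ^ (k + 1) ∣ (m : ℤ) - (m ^ 2 * y : ℕ) := by
        exact dvd_trans (by exact_mod_cast h1) hd
      have h2' : ((p : ℤ)) ^ (k + 1) ∣ ((m ^ 2 * y : ℕ) : ℤ) := by exact_mod_cast h2
      have := dvd_add this h2'
      simpa using this
    have h4 : p ^ (k + 1) ∣ m := by exact_mod_cast h3
    rw [hpp.pow_dvd_iff_le_factorization hm0] at h4
    omega
  · intro hcond
    rcases eq_or_ne m 0 with rfl | hm0
    · exact ⟨0, by simp⟩
    · set d := Nat.gcd m n with hd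
      have hdn : d ∣ n := Nat.gcd_dvd_right m n
      have hdm : d ∣ m := Nat.gcd_dvd_left m n
      have hnd0 : n / d ≠ 0 := Nat.div_ne_zero_iff_of_dvd hdn |>.mpr ⟨hn.ne', Nat.gcd_ne_zero_left hm0⟩
      have hcop : Nat.Coprime m (n / d) := by
        by_contra hnc
        obtain ⟨p, hpp, hpm, hpnd⟩ := Nat.Prime.not_coprime_iff_dvd.mp hnc
        have hpn : p ∣ n := hpnd.trans (Nat.div_dvd_of_dvd hdn)
        have hkpos : 0 < m.factorization p := hpp.factorization_pos_of_dvd hm0 hpm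
        have hcond' := hcond p (Nat.mem_primeFactors.mpr ⟨hpp, hpn, hn.ne'⟩)
        have hle : n.factorization p ≤ m.factorization p := by
          by_contra hlt
          exact hcond' ⟨hkpos, by omega⟩
        -- v_p (n/d) = 0
        have hfd : (n / d).factorization p = 0 := by
          rw [Nat.factorization_div hdn]
          have : d.factorization p = n.factorization p := by
            rw [hd, Nat.factorization_gcd hm0 hn.ne']
            simp [min_eq_right hle]
          simp [this]
        have : 0 < (n / d).factorization p := hpp.factorization_pos_of_dvd hnd0 hpnd
        omega
      -- get Bezout over ℤ
      have hcopZ : IsCoprime (m : ℤ) ((n / d : ℕ) : ℤ) := by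
        rw [Int.isCoprime_iff_gcd_eq_one]
        exact_mod_cast hcop
      obtain ⟨u, v, huv⟩ := hcopZ
      -- n ∣ m * (m * u - 1) in ℤ
      have hdvd : (n : ℤ) ∣ (m : ℤ) * ((m : ℤ) * u - 1) := by
        have h1 : ((n / d : ℕ) : ℤ) ∣ ((m : ℤ) * u - 1) := ⟨-v, by linarith⟩
        have h2 : ((d : ℕ) : ℤ) ∣ (m : ℤ) := Int.natCast_dvd_natCast.mpr hdm
        have hnn : (n : ℤ) = (d : ℤ) * ((n / d : ℕ) : ℤ) := by
          exact_mod_cast (Nat.mul_div_cancel' hdn).symm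
        rw [hnn]
        exact mul_dvd_mul h2 h1
      refine ⟨(u : ZMod n), ?_⟩
      have : (((m : ℤ) ^ 2 * u - m : ℤ) : ZMod n) = 0 := by
        rw [ZMod.intCast_zmod_eq_zero_iff_dvd]
        convert hdvd using 1; ring
      push_cast at this
      linear_combination this

open Classical in
theorem rho_eq_inclusion_exclusion (n : ℕ) (hn : 0 < n) :
    (rho n : ℤ) =
      ∑ I ∈ n.primeFactors.powerset, (-1 : ℤ) ^ I.card *
        (((Finset.range n).filter fun m =>
          ∀ p ∈ I, 0 < m.factorization p ∧ m.factorization p < n.factorization p).card : ℤ) := by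
  haveI : NeZero n := ⟨hn.ne'⟩
  set Q : ℕ → ℕ → Prop := fun p m => 0 < m.factorization p ∧ m.factorization p < n.factorization p
    with hQ
  have hrho : rho n = ((Finset.range n).filter fun m => IsRegularElem ((m : ℕ) : ZMod n)).card := by
    rw [rho, Nat.card_eq_fintype_card, Fintype.card_subtype]
    apply Finset.card_bij (fun m _ => m.val)
    · intro a ha
      simp only [Finset.mem_filter, Finset.mem_range, Finset.mem_univ, true_and] at *
      exact ⟨ZMod.val_lt a, by rwa [ZMod.natCast_rightInverse a]⟩
    · intro a _ b _ h
      exact ZMod.val_injective n h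
    · intro b hb
      simp only [Finset.mem_filter, Finset.mem_range] at hb
      refine ⟨(b : ZMod n), ?_, by rw [ZMod.val_cast_of_lt hb.1]⟩
      simp only [Finset.mem_filter, Finset.mem_univ, true_and]
      exact hb.2
  calc (rho n : ℤ)
      = ∑ m ∈ Finset.range n, (if ∀ p ∈ n.primeFactors, ¬ Q p m then (1:ℤ) else 0) := by
        rw [hrho, Finset.card_filter]
        push_cast
        refine Finset.sum_congr rfl fun m hm => ?_
        rw [key n hn m]; simp [hQ]
    _ = ∑ m ∈ Finset.range n, ∏ p ∈ n.primeFactors, ((if Q p m then (-1:ℤ) else 0) + 1) := by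
        refine Finset.sum_congr rfl fun m hm => ?_
        rw [← Finset.prod_boole]
        refine (Finset.prod_congr rfl fun p hp => ?_).symm
        by_cases h : Q p m
        · rw [if_pos h, if_neg (not_not_intro h)]; ring
        · rw [if_neg h, if_pos h]; ring
    _ = ∑ m ∈ Finset.range n, ∑ I ∈ n.primeFactors.powerset,
          (-1:ℤ) ^ I.card * (if ∀ p ∈ I, Q p m then (1:ℤ) else 0) := by
        refine Finset.sum_congr rfl fun m hm => ?_
        rw [Finset.prod_add]
        refine Finset.sum_congr rfl fun I hI => ?_
        rw [Finset.prod_const_one, mul_one, ← Finset.prod_boole]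
        have : ∀ p, (if Q p m then (-1:ℤ) else 0) = (-1) * (if Q p m then (1:ℤ) else 0) := by
          intro p; by_cases h : Q p m
          · rw [if_pos h, if_pos h]; ring
          · rw [if_neg h, if_neg h]; ring
        simp_rw [this]
        rw [Finset.prod_mul_distrib, Finset.prod_const]
    _ = _ := by
        rw [Finset.sum_comm]
        refine Finset.sum_congr rfl fun I hI => ?_
        rw [Finset.card_filter]
        push_cast
        rw [Finset.mul_sum]
end

section
/- Let n be a positive natural number, let P(n) be its set of prime divisors, and let I ⊆ P(n). For each prime p, let m_p denote the p-adic valuation of m and n_p that of n. Then the number of m with 0 ≤ m < n satisfying 0 < m_p < n_p for all p ∈ I equals Σ_{J ⊆ I} (-1)^{|J|} · n / (Π_{i ∈ I} i · Π_{j ∈ J} j^(n_j - 1)). -/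
open Finset

private lemma prod_pow_dvd_aux (f : ℕ → ℕ) (m : ℕ) :
    ∀ (I : Finset ℕ), (∀ p ∈ I, p.Prime) → (∀ p ∈ I, p ^ f p ∣ m) →
      (∏ p ∈ I, p ^ f p) ∣ m := by
  intro I
  induction I using Finset.induction with
  | empty => simp
  | @insert q s hq ih =>
    intro hp h
    rw [Finset.prod_insert hq]
    have hqp : q.Prime := hp q (mem_insert_self q s)
    have hcop : Nat.Coprime (q ^ f q) (∏ p ∈ s, p ^ f p) := by
      apply Nat.Coprime.prod_right
      intro p hps
      exact Nat.Coprime.pow _ _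
        ((Nat.coprime_primes hqp (hp p (mem_insert_of_mem hps))).mpr
          (fun e => hq (e ▸ hps)))
    exact hcop.mul_dvd_of_dvd_of_dvd (h q (mem_insert_self q s))
      (ih (fun p hps => hp p (mem_insert_of_mem hps))
        (fun p hps => h p (mem_insert_of_mem hps)))

private lemma prod_pow_dvd_iff {I : Finset ℕ} (hp : ∀ p ∈ I, p.Prime) (f : ℕ → ℕ) (m : ℕ) :
    (∏ p ∈ I, p ^ f p) ∣ m ↔ ∀ p ∈ I, p ^ f p ∣ m :=
  ⟨fun h p hpI => (dvd_prod_of_mem _ hpI).trans h,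
   fun h => prod_pow_dvd_aux f m I hp h⟩

private lemma card_range_filter_dvd {n d : ℕ} (hd : 0 < d) (hdn : d ∣ n) :
    ((Finset.range n).filter (fun m => d ∣ m)).card = n / d := by
  classical
  rw [← Finset.card_range (n / d)]
  apply Finset.card_bij' (fun m _ => m / d) (fun k _ => k * d)
  · intro m hm
    rw [Finset.mem_filter, Finset.mem_range] at hm
    rw [Finset.mem_range]
    exact Nat.div_lt_div_of_lt_of_dvd hdn hm.1
  · intro k hk
    rw [Finset.mem_range] at hk
    rw [Finset.mem_filter, Finset.mem_range]
    refine ⟨?_, dvd_mul_left d k⟩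
    calc k * d < (n / d) * d := by
          exact (Nat.mul_lt_mul_right hd).mpr hk
      _ = n := Nat.div_mul_cancel hdn
  · intro m hm
    rw [Finset.mem_filter] at hm
    exact Nat.div_mul_cancel hm.2
  · intro k _
    exact Nat.mul_div_cancel k hd

open Classical in
theorem card_inter_eq_inclusion_exclusion (n : ℕ) (hn : 0 < n) (I : Finset ℕ)
    (hI : I ⊆ n.primeFactors) :
    (((Finset.range n).filter fun m =>
        ∀ p ∈ I, 0 < m.factorization p ∧ m.factorization p < n.factorization p).card : ℤ) =
      ∑ J ∈ I.powerset, (-1 : ℤ) ^ J.card *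
        ((n / ((∏ i ∈ I, i) * ∏ j ∈ J, j ^ (n.factorization j - 1)) : ℕ) : ℤ) := by
  classical
  have hprime : ∀ p ∈ I, p.Prime := fun p hp => Nat.prime_of_mem_primeFactors (hI hp)
  have hpos : ∀ p ∈ I, 0 < n.factorization p := fun p hp =>
    Nat.Prime.factorization_pos_of_dvd (hprime p hp) hn.ne'
      (Nat.dvd_of_mem_primeFactors (hI hp))
  set e : Finset ℕ → ℕ → ℕ := fun J p => if p ∈ J then n.factorization p else 1 with he
  set D : Finset ℕ → ℕ := fun J => ∏ p ∈ I, p ^ e J p with hD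
  -- D J divides n
  have hDdvd : ∀ J ∈ I.powerset, D J ∣ n := by
    intro J hJ
    apply prod_pow_dvd_aux _ _ _ hprime
    intro p hp
    refine dvd_trans (pow_dvd_pow p ?_) (Nat.ordProj_dvd n p)
    have := hpos p hp
    by_cases hpJ : p ∈ J <;> simp [he, hpJ] <;> omega
  have hDpos : ∀ J, 0 < D J := by
    intro J
    apply Finset.prod_pos
    intro p hp
    exact pow_pos (hprime p hp).pos _
  -- D J equals the product in the statement
  have hDeq : ∀ J ∈ I.powerset, D J = (∏ i ∈ I, i) * ∏ j ∈ J, j ^ (n.factorization j - 1) := by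
    intro J hJ
    rw [Finset.mem_powerset] at hJ
    have : ∀ p ∈ I, p ^ e J p = p * p ^ (e J p - 1) := by
      intro p hp
      have h1 : 1 ≤ e J p := by
        have := hpos p hp
        by_cases hpJ : p ∈ J <;> simp [he, hpJ] <;> omega
      conv_lhs => rw [show e J p = (e J p - 1) + 1 by omega]
      rw [pow_succ, mul_comm]
    rw [hD]
    simp only []
    rw [Finset.prod_congr rfl this, Finset.prod_mul_distrib]
    congr 1
    rw [← Finset.prod_subset hJ (fun p hpI hpJ => by simp [he, hpJ])]
    apply Finset.prod_congr rfl
    intro p hp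
    simp [he, hp]
  -- indicator identity for each m
  have key : ∀ m ∈ Finset.range n,
      (if (∀ p ∈ I, 0 < m.factorization p ∧ m.factorization p < n.factorization p)
        then (1 : ℤ) else 0)
      = ∑ J ∈ I.powerset, (-1 : ℤ) ^ J.card * (if D J ∣ m then 1 else 0) := by
    intro m hm
    rw [Finset.mem_range] at hm
    have lhs_eq : (if (∀ p ∈ I, 0 < m.factorization p ∧ m.factorization p < n.factorization p)
        then (1 : ℤ) else 0)
        = ∏ p ∈ I, ((-(if p ^ n.factorization p ∣ m then (1 : ℤ) else 0))
            + (if p ∣ m then 1 else 0)) := by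
      rw [← Finset.prod_boole]
      apply Finset.prod_congr rfl
      intro p hp
      have hpp := hprime p hp
      have hiff : (0 < m.factorization p ∧ m.factorization p < n.factorization p)
          ↔ (p ∣ m ∧ ¬ p ^ n.factorization p ∣ m) := by
        rcases Nat.eq_zero_or_pos m with rfl | hm0
        · simp
        · rw [Nat.Prime.pow_dvd_iff_le_factorization hpp hm0.ne',
            Nat.Prime.dvd_iff_one_le_factorization hpp hm0.ne']
          omega
      rw [if_congr hiff rfl rfl]
      have himp : p ^ n.factorization p ∣ m → p ∣ m := fun h =>
        (dvd_pow_self p (hpos p hp).ne').trans h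
      by_cases h1 : p ∣ m <;> by_cases h2 : p ^ n.factorization p ∣ m <;>
        simp [h1, h2, himp] <;> tauto
    rw [lhs_eq, Finset.prod_add]
    apply Finset.sum_congr rfl
    intro J hJ
    rw [Finset.mem_powerset] at hJ
    have hneg : (∏ p ∈ J, (-(if p ^ n.factorization p ∣ m then (1 : ℤ) else 0)))
        = (-1 : ℤ) ^ J.card * ∏ p ∈ J, (if p ^ n.factorization p ∣ m then (1 : ℤ) else 0) := by
      have hc : ∀ x ∈ J, (-(if x ^ n.factorization x ∣ m then (1 : ℤ) else 0))
          = (-1) * (if x ^ n.factorization x ∣ m then (1 : ℤ) else 0) := fun x _ => by ring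
      rw [Finset.prod_congr rfl hc, Finset.prod_mul_distrib, Finset.prod_const]
    rw [hneg]
    have hsplit : (if D J ∣ m then (1 : ℤ) else 0)
        = (∏ p ∈ J, (if p ^ n.factorization p ∣ m then (1 : ℤ) else 0))
          * ∏ p ∈ I \ J, (if p ∣ m then (1 : ℤ) else 0) := by
      rw [Finset.prod_boole, Finset.prod_boole]
      have hDdvdm : D J ∣ m ↔ (∀ p ∈ J, p ^ n.factorization p ∣ m) ∧ ∀ p ∈ I \ J, p ∣ m := by
        rw [hD]
        simp only []
        rw [prod_pow_dvd_iff hprime]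
        constructor
        · intro h
          constructor
          · intro p hp
            have := h p (hJ hp)
            simpa [he, hp] using this
          · intro p hp
            rw [Finset.mem_sdiff] at hp
            have := h p hp.1
            simpa [he, hp.2] using this
        · rintro ⟨h1, h2⟩ p hp
          by_cases hpJ : p ∈ J
          · simpa [he, hpJ] using h1 p hpJ
          · simpa [he, hpJ] using h2 p (Finset.mem_sdiff.mpr ⟨hp, hpJ⟩)
      simp only [hDdvdm]
      by_cases hA : ∀ p ∈ J, p ^ n.factorization p ∣ m <;>
        by_cases hB : ∀ p ∈ I \ J, p ∣ m
      · rw [if_pos hA, if_pos hB, if_pos ⟨hA, hB⟩, one_mul]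
      · rw [if_pos hA, if_neg hB, if_neg (fun h => hB h.2), mul_zero]
      · rw [if_neg hA, if_pos hB, if_neg (fun h => hA h.1), zero_mul]
      · rw [if_neg hA, if_neg hB, if_neg (fun h => hA h.1), zero_mul]
    rw [hsplit]
    ring
  rw [← Finset.sum_boole, Finset.sum_congr rfl key, Finset.sum_comm]
  apply Finset.sum_congr rfl
  intro J hJ
  rw [← Finset.mul_sum]
  congr 1
  rw [Finset.sum_boole, card_range_filter_dvd (hDpos J) (hDdvd J hJ), hDeq J hJ]
end
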